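/- Every sequent derivable in the Lambek calculus with cyclic shift L^∘ has a derivation that does not use the rule (cut); i.e., the cut rule is eliminable in L^∘. -/

import Mathlib

/-- Types of the Lambek calculus with the cyclic shift `L^∘`, built from
primitive types `P` by `\` (`ldiv A B = A \ B`), `/` (`rdiv B A = B / A`),
`·` (`mul`) and the cyclic shift `^∘` (`circ`). -/
inductive Fm (P : Type) : Type
  | prim : P → Fm P
  | ldiv : Fm P → Fm P → Fm P
  | rdiv : Fm P → Fm P → Fm P
  | mul  : Fm P → Fm P → Fm P
  | circ : Fm P → Fm P
deriving DecidableEq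

open Fm

/-- Derivability of sequents in the Lambek calculus with the cyclic shift `L^∘`.
The Boolean flag indicates whether the rule (cut) may be used:
`Dv P true` is `L^∘` (with cut), `Dv P false` is its cut-free part. -/
inductive Dv (P : Type) : Bool → List (Fm P) → Fm P → Prop
  | ax (c : Bool) (A : Fm P) :
      Dv P c [A] A
  | ldivL (c : Bool) (Γ Δ Pi : List (Fm P)) (A B C : Fm P) :
      Dv P c (Γ ++ B :: Δ) C → Dv P c Pi A → Pi ≠ [] →
      Dv P c (Γ ++ Pi ++ ldiv A B :: Δ) C
  | ldivR (c : Bool) (Pi : List (Fm P)) (A B : Fm P) :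
      Dv P c (A :: Pi) B → Pi ≠ [] →
      Dv P c Pi (ldiv A B)
  | rdivL (c : Bool) (Γ Δ Pi : List (Fm P)) (A B C : Fm P) :
      Dv P c (Γ ++ B :: Δ) C → Dv P c Pi A → Pi ≠ [] →
      Dv P c (Γ ++ rdiv B A :: (Pi ++ Δ)) C
  | rdivR (c : Bool) (Pi : List (Fm P)) (A B : Fm P) :
      Dv P c (Pi ++ [A]) B → Pi ≠ [] →
      Dv P c Pi (rdiv B A)
  | mulL (c : Bool) (Γ Δ : List (Fm P)) (A B C : Fm P) :
      Dv P c (Γ ++ A :: B :: Δ) C →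
      Dv P c (Γ ++ mul A B :: Δ) C
  | mulR (c : Bool) (Pi Psi : List (Fm P)) (A B : Fm P) :
      Dv P c Pi A → Dv P c Psi B → Pi ≠ [] → Psi ≠ [] →
      Dv P c (Pi ++ Psi) (mul A B)
  | circR (c : Bool) (Pi : List (Fm P)) (A : Fm P) :
      Dv P c Pi A →
      Dv P c Pi (circ A)
  | circL (c : Bool) (A B : Fm P) :
      Dv P c [B] (circ A) →
      Dv P c [circ B] (circ A)
  | circC (c : Bool) (Pi Psi : List (Fm P)) (A : Fm P) :
      Dv P c (Pi ++ Psi) (circ A) → Pi ≠ [] → Psi ≠ [] →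
      Dv P c (Psi ++ Pi) (circ A)
  | cut (Γ Δ Pi : List (Fm P)) (A B : Fm P) :
      Dv P true Pi A → Dv P true (Γ ++ A :: Δ) B → Pi ≠ [] →
      Dv P true (Γ ++ Pi ++ Δ) B

/-!
Cut is admissible in the cut-free calculus, by induction on the size of the cut formula `A`.
For fixed `A`, the cut is permuted upwards through the right premise until `A` is principal there,
i.e. introduced by a left rule, and then upwards through the left premise until `A` is principal
there as well; a right rule meeting a left rule for `A` is replaced by cuts on immediate
subformulas of `A`. The shift rules do not get in the way because `A^∘` is principal on the left
only in (∘→), whose succedent is itself shifted, so a left premise ending in (∘→) or (∘) commutes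
with such a cut. Replacing the cuts of a derivation from the top down by admissible ones removes
them all.
-/

theorem List.append_cons_eq_append_iff {α : Type*} {Γ Δ L₁ L₂ : List α} {a : α} :
    Γ ++ a :: Δ = L₁ ++ L₂ ↔
      (∃ Θ, L₁ = Γ ++ a :: Θ ∧ Δ = Θ ++ L₂) ∨ ∃ Θ, Γ = L₁ ++ Θ ∧ L₂ = Θ ++ a :: Δ := by
  rw [List.append_eq_append_iff]
  constructor
  · rintro (⟨Θ, rfl, h⟩ | ⟨Θ, rfl, h⟩)
    · rcases List.cons_eq_append_iff.mp h with ⟨rfl, rfl⟩ | ⟨Θ', rfl, rfl⟩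
      · exact .inr ⟨[], by simp, rfl⟩
      · exact .inl ⟨Θ', by simp, rfl⟩
    · exact .inr ⟨Θ, rfl, h⟩
  · rintro (⟨Θ, rfl, rfl⟩ | ⟨Θ, rfl, rfl⟩)
    · exact .inl ⟨a :: Θ, by simp, by simp⟩
    · exact .inr ⟨Θ, rfl, rfl⟩

theorem List.append_cons_eq_append_cons_iff {α : Type*} {Γ Δ L₁ L₂ : List α} {a x : α} :
    Γ ++ a :: Δ = L₁ ++ x :: L₂ ↔ (Γ = L₁ ∧ a = x ∧ Δ = L₂) ∨
      (∃ Θ, L₁ = Γ ++ a :: Θ ∧ Δ = Θ ++ x :: L₂) ∨ ∃ Θ, Γ = L₁ ++ x :: Θ ∧ L₂ = Θ ++ a :: Δ := by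
  rw [List.append_cons_eq_append_iff]
  constructor
  · rintro (h | ⟨Θ, rfl, h⟩)
    · exact .inr (.inl h)
    · rcases List.cons_eq_append_iff.mp h with ⟨rfl, h⟩ | ⟨Θ', rfl, rfl⟩
      · obtain ⟨rfl, rfl⟩ := List.cons_eq_cons.mp h.symm
        exact .inl ⟨by simp, rfl, rfl⟩
      · exact .inr (.inr ⟨Θ', rfl, rfl⟩)
  · rintro (⟨rfl, rfl, rfl⟩ | h | ⟨Θ, rfl, rfl⟩)
    · exact .inr ⟨[], by simp, rfl⟩
    · exact .inl h
    · exact .inr ⟨x :: Θ, rfl, rfl⟩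

namespace Dv

variable {P : Type}

theorem ne_nil {c : Bool} {Γ : List (Fm P)} {A : Fm P} (d : Dv P c Γ A) : Γ ≠ [] := by
  induction d <;> simp_all

@[elab_as_elim]
theorem cutFree_induction {motive : (Γ : List (Fm P)) → (A : Fm P) → Dv P false Γ A → Prop}
    (ax : ∀ A, motive [A] A (.ax false A))
    (ldivL : ∀ Γ Δ Pi A B C (d₁ : Dv P false (Γ ++ B :: Δ) C) (d₂ : Dv P false Pi A)
      (h : Pi ≠ []), motive _ _ d₁ → motive _ _ d₂ →
        motive _ _ (.ldivL false Γ Δ Pi A B C d₁ d₂ h))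
    (ldivR : ∀ Pi A B (d : Dv P false (A :: Pi) B) (h : Pi ≠ []), motive _ _ d →
      motive _ _ (.ldivR false Pi A B d h))
    (rdivL : ∀ Γ Δ Pi A B C (d₁ : Dv P false (Γ ++ B :: Δ) C) (d₂ : Dv P false Pi A)
      (h : Pi ≠ []), motive _ _ d₁ → motive _ _ d₂ →
        motive _ _ (.rdivL false Γ Δ Pi A B C d₁ d₂ h))
    (rdivR : ∀ Pi A B (d : Dv P false (Pi ++ [A]) B) (h : Pi ≠ []), motive _ _ d →
      motive _ _ (.rdivR false Pi A B d h))
    (mulL : ∀ Γ Δ A B C (d : Dv P false (Γ ++ A :: B :: Δ) C), motive _ _ d →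
      motive _ _ (.mulL false Γ Δ A B C d))
    (mulR : ∀ Pi Psi A B (d₁ : Dv P false Pi A) (d₂ : Dv P false Psi B) (h₁ : Pi ≠ [])
      (h₂ : Psi ≠ []), motive _ _ d₁ → motive _ _ d₂ →
        motive _ _ (.mulR false Pi Psi A B d₁ d₂ h₁ h₂))
    (circR : ∀ Pi A (d : Dv P false Pi A), motive _ _ d → motive _ _ (.circR false Pi A d))
    (circL : ∀ A B (d : Dv P false [B] (circ A)), motive _ _ d → motive _ _ (.circL false A B d))
    (circC : ∀ Pi Psi A (d : Dv P false (Pi ++ Psi) (circ A)) (h₁ : Pi ≠ []) (h₂ : Psi ≠ []),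
      motive _ _ d → motive _ _ (.circC false Pi Psi A d h₁ h₂))
    {Γ : List (Fm P)} {A : Fm P} (d : Dv P false Γ A) : motive Γ A d := by
  suffices ∀ {c Γ A} (d : Dv P c Γ A) (hc : c = false), motive Γ A (hc ▸ d) from this d rfl
  intro c Γ A d
  induction d with
  | ax => exact fun _ => ax _
  | ldivL _ _ _ _ _ _ _ _ _ h ih₁ ih₂ =>
    rintro rfl; exact ldivL _ _ _ _ _ _ _ _ h (ih₁ rfl) (ih₂ rfl)
  | ldivR _ _ _ _ _ h ih => rintro rfl; exact ldivR _ _ _ _ h (ih rfl)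
  | rdivL _ _ _ _ _ _ _ _ _ h ih₁ ih₂ =>
    rintro rfl; exact rdivL _ _ _ _ _ _ _ _ h (ih₁ rfl) (ih₂ rfl)
  | rdivR _ _ _ _ _ h ih => rintro rfl; exact rdivR _ _ _ _ h (ih rfl)
  | mulL _ _ _ _ _ _ _ ih => rintro rfl; exact mulL _ _ _ _ _ _ (ih rfl)
  | mulR _ _ _ _ _ _ _ h₁ h₂ ih₁ ih₂ =>
    rintro rfl; exact mulR _ _ _ _ _ _ h₁ h₂ (ih₁ rfl) (ih₂ rfl)
  | circR _ _ _ _ ih => rintro rfl; exact circR _ _ _ (ih rfl)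
  | circL _ _ _ _ ih => rintro rfl; exact circL _ _ _ (ih rfl)
  | circC _ _ _ _ _ h₁ h₂ ih => rintro rfl; exact circC _ _ _ _ h₁ h₂ (ih rfl)
  | cut => nofun

end Dv

section CutAdmissibility

variable {P : Type}

/-- `LeftIntro P A Γ Δ C`: the sequent `Γ, A, Δ → C` is the conclusion of a left rule with
principal formula `A` and cut-free premises. -/
inductive LeftIntro (P : Type) : Fm P → List (Fm P) → List (Fm P) → Fm P → Prop
  | ldiv {Γ Δ Pi : List (Fm P)} {A B C : Fm P} :
      Dv P false (Γ ++ B :: Δ) C → Dv P false Pi A → Pi ≠ [] → LeftIntro P (ldiv A B) (Γ ++ Pi) Δ C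
  | rdiv {Γ Δ Pi : List (Fm P)} {A B C : Fm P} :
      Dv P false (Γ ++ B :: Δ) C → Dv P false Pi A → Pi ≠ [] → LeftIntro P (rdiv B A) Γ (Pi ++ Δ) C
  | mul {Γ Δ : List (Fm P)} {A B C : Fm P} :
      Dv P false (Γ ++ A :: B :: Δ) C → LeftIntro P (mul A B) Γ Δ C
  | circ {A B : Fm P} : Dv P false [B] (circ A) → LeftIntro P (circ B) [] [] (circ A)

theorem LeftIntro.dv {A C : Fm P} {Γ Δ : List (Fm P)} :
    LeftIntro P A Γ Δ C → Dv P false (Γ ++ A :: Δ) C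
  | .ldiv d₁ d₂ h => by simpa using Dv.ldivL false _ _ _ _ _ _ d₁ d₂ h
  | .rdiv d₁ d₂ h => Dv.rdivL false _ _ _ _ _ _ d₁ d₂ h
  | .mul d => Dv.mulL false _ _ _ _ _ d
  | .circ d => Dv.circL false _ _ d

def PrincipalCut (P : Type) (Pi : List (Fm P)) (A : Fm P) : Prop :=
  ∀ Γ Δ C, LeftIntro P A Γ Δ C → Dv P false (Γ ++ Pi ++ Δ) C

def CutInto (P : Type) (Pi : List (Fm P)) (A : Fm P) (Ξ : List (Fm P)) (C : Fm P) : Prop :=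
  ∀ Γ Δ, Ξ = Γ ++ A :: Δ → Dv P false (Γ ++ Pi ++ Δ) C

def CutAdmissible (P : Type) (A : Fm P) : Prop :=
  ∀ Γ Δ Pi B, Dv P false Pi A → Dv P false (Γ ++ A :: Δ) B → Dv P false (Γ ++ Pi ++ Δ) B

section Permutation

variable {Pi : List (Fm P)} {A : Fm P}

theorem cutInto_ldivL (hA : PrincipalCut P Pi A) {Γ' Δ' Pi' : List (Fm P)} {A' B' C : Fm P}
    (d₁ : Dv P false (Γ' ++ B' :: Δ') C) (d₂ : Dv P false Pi' A') (hPi' : Pi' ≠ [])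
    (ih₁ : CutInto P Pi A (Γ' ++ B' :: Δ') C) (ih₂ : CutInto P Pi A Pi' A') :
    CutInto P Pi A (Γ' ++ Pi' ++ ldiv A' B' :: Δ') C := by
  intro Γ Δ h
  rcases List.append_cons_eq_append_cons_iff.mp h.symm with
    ⟨rfl, rfl, rfl⟩ | ⟨Θ, hΘ, rfl⟩ | ⟨Θ, rfl, rfl⟩
  · exact hA _ _ _ (.ldiv d₁ d₂ hPi')
  · rcases List.append_cons_eq_append_iff.mp hΘ.symm with ⟨Θ', rfl, rfl⟩ | ⟨Θ', rfl, rfl⟩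
    · have e := ih₁ Γ (Θ' ++ B' :: Δ') (by simp)
      simpa using Dv.ldivL false (Γ ++ Pi ++ Θ') Δ' Pi' A' B' C (by simpa using e) d₂ hPi'
    · have e := ih₂ Θ' Θ rfl
      simpa using Dv.ldivL false Γ' Δ' _ A' B' C d₁ e e.ne_nil
  · have e := ih₁ (Γ' ++ B' :: Θ) Δ (by simp)
    simpa using Dv.ldivL false Γ' (Θ ++ Pi ++ Δ) Pi' A' B' C (by simpa using e) d₂ hPi'

theorem cutInto_rdivL (hA : PrincipalCut P Pi A) {Γ' Δ' Pi' : List (Fm P)} {A' B' C : Fm P}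
    (d₁ : Dv P false (Γ' ++ B' :: Δ') C) (d₂ : Dv P false Pi' A') (hPi' : Pi' ≠ [])
    (ih₁ : CutInto P Pi A (Γ' ++ B' :: Δ') C) (ih₂ : CutInto P Pi A Pi' A') :
    CutInto P Pi A (Γ' ++ rdiv B' A' :: (Pi' ++ Δ')) C := by
  intro Γ Δ h
  rcases List.append_cons_eq_append_cons_iff.mp h.symm with
    ⟨rfl, rfl, rfl⟩ | ⟨Θ, rfl, rfl⟩ | ⟨Θ, rfl, hΘ⟩
  · exact hA _ _ _ (.rdiv d₁ d₂ hPi')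
  · have e := ih₁ Γ (Θ ++ B' :: Δ') (by simp)
    simpa using Dv.rdivL false (Γ ++ Pi ++ Θ) Δ' Pi' A' B' C (by simpa using e) d₂ hPi'
  · rcases List.append_cons_eq_append_iff.mp hΘ.symm with ⟨Θ', rfl, rfl⟩ | ⟨Θ', rfl, rfl⟩
    · have e := ih₂ Θ Θ' rfl
      simpa using Dv.rdivL false Γ' Δ' _ A' B' C d₁ e e.ne_nil
    · have e := ih₁ (Γ' ++ B' :: Θ') Δ (by simp)
      simpa using Dv.rdivL false Γ' (Θ' ++ Pi ++ Δ) Pi' A' B' C (by simpa using e) d₂ hPi'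

theorem cutInto_mulL (hA : PrincipalCut P Pi A) {Γ' Δ' : List (Fm P)} {A' B' C : Fm P}
    (d : Dv P false (Γ' ++ A' :: B' :: Δ') C) (ih : CutInto P Pi A (Γ' ++ A' :: B' :: Δ') C) :
    CutInto P Pi A (Γ' ++ mul A' B' :: Δ') C := by
  intro Γ Δ h
  rcases List.append_cons_eq_append_cons_iff.mp h.symm with
    ⟨rfl, rfl, rfl⟩ | ⟨Θ, rfl, rfl⟩ | ⟨Θ, rfl, rfl⟩
  · exact hA _ _ _ (.mul d)
  · have e := ih Γ (Θ ++ A' :: B' :: Δ') (by simp)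
    simpa using Dv.mulL false (Γ ++ Pi ++ Θ) Δ' A' B' C (by simpa using e)
  · have e := ih (Γ' ++ A' :: B' :: Θ) Δ (by simp)
    simpa using Dv.mulL false Γ' (Θ ++ Pi ++ Δ) A' B' C (by simpa using e)

theorem cutInto_of_principalCut (d : Dv P false Pi A) (hA : PrincipalCut P Pi A) {Ξ : List (Fm P)}
    {C : Fm P} (e : Dv P false Ξ C) : CutInto P Pi A Ξ C := by
  induction e using Dv.cutFree_induction with
  | ax =>
    intro Γ Δ h
    obtain ⟨rfl, rfl, rfl⟩ : Γ = [] ∧ _ ∧ Δ = [] := by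
      simpa using List.append_eq_singleton_iff.mp h.symm
    simpa using d
  | ldivL _ _ _ _ _ _ e₁ e₂ h ih₁ ih₂ => exact cutInto_ldivL hA e₁ e₂ h ih₁ ih₂
  | rdivL _ _ _ _ _ _ e₁ e₂ h ih₁ ih₂ => exact cutInto_rdivL hA e₁ e₂ h ih₁ ih₂
  | mulL _ _ _ _ _ e ih => exact cutInto_mulL hA e ih
  | ldivR Pi' A' B' _ _ ih =>
    rintro Γ Δ rfl
    have e := ih (A' :: Γ) Δ rfl
    exact Dv.ldivR false _ A' B' e (by simp [d.ne_nil])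
  | rdivR Pi' A' B' _ _ ih =>
    rintro Γ Δ rfl
    have e := ih Γ (Δ ++ [A']) (by simp)
    exact Dv.rdivR false _ A' B' (by simpa using e) (by simp [d.ne_nil])
  | mulR Pi₁ Pi₂ A' B' e₁ e₂ h₁ h₂ ih₁ ih₂ =>
    intro Γ Δ h
    rcases List.append_cons_eq_append_iff.mp h.symm with ⟨Θ, rfl, rfl⟩ | ⟨Θ, rfl, rfl⟩
    · have e := ih₁ Γ Θ rfl
      simpa using Dv.mulR false _ Pi₂ A' B' e e₂ e.ne_nil h₂
    · have e := ih₂ Θ Δ rfl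
      simpa using Dv.mulR false Pi₁ _ A' B' e₁ e h₁ e.ne_nil
  | circR Pi' A' _ ih => exact fun Γ Δ h => Dv.circR false _ A' (ih Γ Δ h)
  | circL A' B' e _ =>
    intro Γ Δ h
    obtain ⟨rfl, rfl, rfl⟩ : Γ = [] ∧ _ ∧ Δ = [] := by
      simpa using List.append_eq_singleton_iff.mp h.symm
    exact hA [] [] _ (.circ e)
  | circC Pi₁ Pi₂ A' _ h₁ h₂ ih =>
    intro Γ Δ h
    rcases List.append_cons_eq_append_iff.mp h.symm with ⟨Θ, rfl, rfl⟩ | ⟨Θ, rfl, rfl⟩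
    · have e := ih (Pi₁ ++ Γ) Θ (by simp)
      simpa using Dv.circC false Pi₁ (Γ ++ Pi ++ Θ) A' (by simpa using e) h₁ (by simp [d.ne_nil])
    · have e := ih Θ (Δ ++ Pi₂) (by simp)
      simpa using Dv.circC false (Θ ++ Pi ++ Δ) Pi₂ A' (by simpa using e) (by simp [d.ne_nil]) h₂

end Permutation

section PrincipalReduction

variable {Pi : List (Fm P)} {A B : Fm P}

theorem principalCut_ldiv (hA : CutAdmissible P A) (hB : CutAdmissible P B)
    (d : Dv P false (A :: Pi) B) : PrincipalCut P Pi (ldiv A B) := by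
  intro _ Δ C hl
  cases hl with
  | ldiv e₁ e₂ _ =>
    have f := hA [] Pi _ B e₂ d
    have g := hB _ Δ _ C (by simpa using f) e₁
    simpa using g

theorem principalCut_rdiv (hA : CutAdmissible P A) (hB : CutAdmissible P B)
    (d : Dv P false (Pi ++ [A]) B) : PrincipalCut P Pi (rdiv B A) := by
  intro Γ _ C hl
  cases hl with
  | rdiv e₁ e₂ _ =>
    have f := hA Pi [] _ B e₂ d
    have g := hB Γ _ _ C (by simpa using f) e₁
    simpa using g

theorem principalCut_mul {Pi₁ Pi₂ : List (Fm P)} (hA : CutAdmissible P A)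
    (hB : CutAdmissible P B) (d₁ : Dv P false Pi₁ A) (d₂ : Dv P false Pi₂ B) :
    PrincipalCut P (Pi₁ ++ Pi₂) (mul A B) := by
  intro Γ Δ C hl
  cases hl with
  | mul e =>
    have f := hA Γ (B :: Δ) Pi₁ C d₁ e
    simpa using hB (Γ ++ Pi₁) Δ Pi₂ C d₂ (by simpa using f)

theorem principalCut_circ (hA : CutAdmissible P A) (d : Dv P false Pi A) :
    PrincipalCut P Pi (circ A) := by
  intro _ _ _ hl
  cases hl with
  | circ e => simpa using hA [] [] Pi _ d e

end PrincipalReduction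

theorem principalCut_of_dv {Pi : List (Fm P)} {A : Fm P}
    (hsub : ∀ A', sizeOf A' < sizeOf A → CutAdmissible P A') (d : Dv P false Pi A) :
    PrincipalCut P Pi A := by
  induction d using Dv.cutFree_induction with
  | ax => exact fun Γ Δ C h => by simpa using h.dv
  | ldivL Γ' Δ' Pi' A' B' _ _ d h ih _ =>
    intro Γ Δ C hl
    have e := ih hsub Γ Δ C hl
    simpa using Dv.ldivL false (Γ ++ Γ') (Δ' ++ Δ) Pi' A' B' C (by simpa using e) d h
  | rdivL Γ' Δ' Pi' A' B' _ _ d h ih _ =>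
    intro Γ Δ C hl
    have e := ih hsub Γ Δ C hl
    simpa using Dv.rdivL false (Γ ++ Γ') (Δ' ++ Δ) Pi' A' B' C (by simpa using e) d h
  | mulL Γ' Δ' A' B' _ _ ih =>
    intro Γ Δ C hl
    have e := ih hsub Γ Δ C hl
    simpa using Dv.mulL false (Γ ++ Γ') (Δ' ++ Δ) A' B' C (by simpa using e)
  | ldivR _ _ _ d _ _ =>
    exact principalCut_ldiv (hsub _ (by simp +arith)) (hsub _ (by simp +arith)) d
  | rdivR _ _ _ d _ _ =>
    exact principalCut_rdiv (hsub _ (by simp +arith)) (hsub _ (by simp +arith)) d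
  | mulR _ _ _ _ d₁ d₂ _ _ _ _ =>
    exact principalCut_mul (hsub _ (by simp +arith)) (hsub _ (by simp +arith)) d₁ d₂
  | circR _ _ d _ => exact principalCut_circ (hsub _ (by simp)) d
  | circL A' B' _ ih =>
    intro _ _ _ hl
    cases hl with
    | @circ C _ e => exact Dv.circL false C B' (by simpa using ih hsub [] [] _ (.circ e))
  | circC Pi₁ Pi₂ A' _ h₁ h₂ ih =>
    intro _ _ _ hl
    cases hl with
    | @circ C _ e =>
      simpa using Dv.circC false Pi₁ Pi₂ C (by simpa using ih hsub [] [] _ (.circ e)) h₁ h₂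

theorem cutAdmissible (A : Fm P) : CutAdmissible P A := fun Γ Δ _ _ d e =>
  cutInto_of_principalCut d (principalCut_of_dv (fun A' _ => cutAdmissible A') d) e Γ Δ rfl
termination_by sizeOf A

end CutAdmissibility

/-- Cut elimination for `L^∘`: every sequent derivable in the Lambek calculus
with the cyclic shift (using cut) has a cut-free derivation. -/
theorem cut_elimination_Lcirc (P : Type) (Γ : List (Fm P)) (B : Fm P)
    (h : Dv P true Γ B) : Dv P false Γ B := by
  suffices ∀ {c Γ B}, Dv P c Γ B → Dv P false Γ B from this h
  intro c Γ B h
  induction h with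
  | cut Γ Δ _ A _ _ _ _ ih₁ ih₂ => exact cutAdmissible A Γ Δ _ _ ih₁ ih₂
  | ax _ A => exact .ax false A
  | ldivL _ Γ Δ Pi A B C _ _ h ih₁ ih₂ => exact .ldivL false Γ Δ Pi A B C ih₁ ih₂ h
  | ldivR _ Pi A B _ h ih => exact .ldivR false Pi A B ih h
  | rdivL _ Γ Δ Pi A B C _ _ h ih₁ ih₂ => exact .rdivL false Γ Δ Pi A B C ih₁ ih₂ h
  | rdivR _ Pi A B _ h ih => exact .rdivR false Pi A B ih h
  | mulL _ Γ Δ A B C _ ih => exact .mulL false Γ Δ A B C ih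
  | mulR _ Pi Psi A B _ _ h₁ h₂ ih₁ ih₂ => exact .mulR false Pi Psi A B ih₁ ih₂ h₁ h₂
  | circR _ Pi A _ ih => exact .circR false Pi A ih
  | circL _ A B _ ih => exact .circL false A B ih
  | circC _ Pi Psi A _ h₁ h₂ ih => exact .circC false Pi Psi A ih h₁ h₂
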